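/- arXiv:1506.03642 — 2 statements merged into one kernel-verified Lean document; each statement's English description precedes it below -/
import Mathlib

section
/- Let V be a finite-dimensional representation of a group π over a field k of characteristic zero, which is semisimple (completely reducible), and let Φ : V × V → k be a π-invariant nondegenerate bilinear form. Then the restriction of Φ to the subspace of invariants V^π is nondegenerate. -/
/-!
Let `S ⊆ V` be the span of the vectors `g w - w`. It is `π`-stable, so it has a `π`-stable
complement `C`; for `c ∈ C` the vector `g c - c` lies in `S ∩ C = 0`, hence `C ⊆ V^π`.
An invariant `v` kills `S`, because `Φ v (g w) = Φ (g v) (g w) = Φ v w`. So if `v ∈ V^π` is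
orthogonal to `V^π`, it is orthogonal to `S + C = V`, and `v = 0` by nondegeneracy.
-/

namespace Representation

section Monoid

variable {k G V : Type*} [CommRing k] [Monoid G] [AddCommGroup V] [Module k V]
  {ρ : Representation k G V}

theorem Coinvariants.map_ker_le (g : G) :
    (Coinvariants.ker ρ).map (ρ g) ≤ Coinvariants.ker ρ := by
  rw [Coinvariants.ker, Submodule.map_span_le]
  rintro _ ⟨⟨h, x⟩, rfl⟩
  have hsplit : ρ g (ρ h x - x) = (ρ (g * h) x - x) - (ρ g x - x) := by
    simp only [map_mul, Module.End.mul_apply, map_sub]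
    abel
  rw [hsplit]
  exact sub_mem (Coinvariants.sub_mem_ker _ _) (Coinvariants.sub_mem_ker _ _)

theorem Coinvariants.apply_eq_zero_of_mem_ker {W : Type*} [AddCommGroup W] [Module k W]
    (f : V →ₗ[k] W) (hf : ∀ g : G, f ∘ₗ ρ g = f) {x : V} (hx : x ∈ Coinvariants.ker ρ) :
    f x = 0 := by
  rw [← Coinvariants.lift_mk ρ f hf, (Coinvariants.mk_eq_zero ρ).2 hx, map_zero]

end Monoid

section Group

variable {k G V : Type*} [CommRing k] [Group G] [AddCommGroup V] [Module k V]
  {ρ : Representation k G V}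

theorem le_invariants_of_disjoint_coinvariantsKer {W : Submodule k V}
    (hW : ∀ g : G, W.map (ρ g) ≤ W) (hdisj : Disjoint (Coinvariants.ker ρ) W) :
    W ≤ ρ.invariants := fun c hc g =>
  sub_eq_zero.1 <| Submodule.disjoint_def.1 hdisj _ (Coinvariants.sub_mem_ker g c)
    (sub_mem (hW g ⟨c, hc, rfl⟩) hc)

theorem bilin_eq_zero_of_mem_invariants_of_mem_coinvariantsKer {Φ : V →ₗ[k] V →ₗ[k] k}
    (hinv : ∀ (g : G) (v w : V), Φ (ρ g v) (ρ g w) = Φ v w) {v w : V}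
    (hv : v ∈ ρ.invariants) (hw : w ∈ Coinvariants.ker ρ) : Φ v w = 0 :=
  Coinvariants.apply_eq_zero_of_mem_ker (Φ v)
    (fun g => LinearMap.ext fun w => by simpa only [LinearMap.comp_apply, hv g] using hinv g v w) hw

end Group

end Representation

theorem nondegenerate_on_invariants_general
    (k : Type) [Field k]
    (V : Type) [AddCommGroup V] [Module k V]
    (π : Type) [Group π] (ρ : Representation k π V)
    -- complete reducibility: every `π`-stable subspace has a `π`-stable complement
    (hss : ∀ W : Submodule k V, (∀ g : π, W.map (ρ g) ≤ W) →
      ∃ W' : Submodule k V, (∀ g : π, W'.map (ρ g) ≤ W') ∧ IsCompl W W')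
    (Φ : V →ₗ[k] V →ₗ[k] k)
    (hinv : ∀ (g : π) (v w : V), Φ (ρ g v) (ρ g w) = Φ v w)
    (hnd : ∀ v : V, (∀ w : V, Φ v w = 0) → v = 0) :
    ∀ v ∈ ρ.invariants, (∀ w ∈ ρ.invariants, Φ v w = 0) → v = 0 := by
  intro v hv hΦ
  obtain ⟨C, hCstab, hcompl⟩ := hss _ Representation.Coinvariants.map_ker_le
  have hC : C ≤ ρ.invariants :=
    Representation.le_invariants_of_disjoint_coinvariantsKer hCstab hcompl.disjoint
  refine hnd v fun w => ?_
  have hw : w ∈ Representation.Coinvariants.ker ρ ⊔ C := hcompl.sup_eq_top ▸ Submodule.mem_top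
  obtain ⟨s, hs, c, hc, rfl⟩ := Submodule.mem_sup.1 hw
  rw [map_add, Representation.bilin_eq_zero_of_mem_invariants_of_mem_coinvariantsKer hinv hv hs,
    hΦ c (hC hc), add_zero]

/-- Deligne's lemma (Weil II, p.218): if `V` is a finite-dimensional completely
reducible representation of a group `π` over a field `k` of characteristic zero,
and `Φ` is a `π`-invariant nondegenerate bilinear form on `V`, then the
restriction of `Φ` to the invariants `V^π` is nondegenerate. -/
theorem nondegenerate_on_invariants
    (k : Type) [Field k] [CharZero k]
    (V : Type) [AddCommGroup V] [Module k V] [FiniteDimensional k V]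
    (π : Type) [Group π] (ρ : Representation k π V)
    -- complete reducibility: every `π`-stable subspace has a `π`-stable complement
    (hss : ∀ W : Submodule k V, (∀ g : π, W.map (ρ g) ≤ W) →
      ∃ W' : Submodule k V, (∀ g : π, W'.map (ρ g) ≤ W') ∧ IsCompl W W')
    (Φ : V →ₗ[k] V →ₗ[k] k)
    (hinv : ∀ (g : π) (v w : V), Φ (ρ g v) (ρ g w) = Φ v w)
    (hnd : ∀ v : V, (∀ w : V, Φ v w = 0) → v = 0) :
    ∀ v ∈ ρ.invariants, (∀ w ∈ ρ.invariants, Φ v w = 0) → v = 0 :=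
  nondegenerate_on_invariants_general k V π ρ hss Φ hinv hnd
end

section
/- Let S ⊆ ℚ[x₁, x₂, …] be a ℚ-linear subspace of the polynomial ring in countably many variables that is stable under all partial derivatives ∂/∂x_i and under multiplication by each variable x_j. If S contains a nonzero polynomial, then S is the whole polynomial ring. -/
open MvPolynomial


lemma coeff_pderiv' (i : ℕ) (m : ℕ →₀ ℕ) (p : MvPolynomial ℕ ℚ) :
    coeff m (pderiv i p) = (m i + 1 : ℚ) * coeff (m + Finsupp.single i 1) p := by
  induction p using MvPolynomial.induction_on' with
  | monomial s a =>
    rw [pderiv_monomial]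
    by_cases hs : s i = 0
    · simp only [hs, Nat.cast_zero, mul_zero]
      rw [coeff_monomial, coeff_monomial]
      have hne : s ≠ m + Finsupp.single i 1 := by
        intro h
        have := congrArg (fun f => f i) h
        simp [hs] at this
      rw [if_neg hne, mul_zero]
      simp
    · rw [coeff_monomial, coeff_monomial]
      have key : s - Finsupp.single i 1 = m ↔ s = m + Finsupp.single i 1 := by
        constructor
        · rintro rfl
          ext j
          by_cases hj : j = i
          · subst hj; simp [Nat.sub_add_cancel (Nat.one_le_iff_ne_zero.mpr hs)]
          · simp [Finsupp.single_apply, if_neg (fun h : i = j => hj h.symm)]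
        · rintro rfl
          ext j
          by_cases hj : j = i
          · subst hj; simp
          · simp [Finsupp.single_apply, if_neg (fun h : i = j => hj h.symm)]
      by_cases h : s = m + Finsupp.single i 1
      · rw [if_pos (key.mpr h), if_pos h]
        have hsi : s i = m i + 1 := by
          have := congrArg (fun f => f i) h
          simpa using this
        rw [hsi]
        push_cast
        ring
      · rw [if_neg (fun hh => h (key.mp hh)), if_neg h, mul_zero]
  | add p q hp hq =>
    simp [hp, hq, mul_add]

lemma sub_single_add (d : ℕ →₀ ℕ) (i : ℕ) (hi : d i ≠ 0) :
    d - Finsupp.single i 1 + Finsupp.single i 1 = d := by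
  ext j
  by_cases hj : j = i
  · subst hj; simp [Nat.sub_add_cancel (Nat.one_le_iff_ne_zero.mpr hi)]
  · simp [Finsupp.single_apply, if_neg (fun h : i = j => hj h.symm)]

lemma one_mem_aux (S : Submodule ℚ (MvPolynomial ℕ ℚ))
    (hder : ∀ (i : ℕ), ∀ p ∈ S, pderiv i p ∈ S) :
    ∀ N : ℕ, ∀ p : MvPolynomial ℕ ℚ, p ∈ S → p ≠ 0 → p.totalDegree ≤ N →
      (1 : MvPolynomial ℕ ℚ) ∈ S := by
  intro N
  induction N with
  | zero =>
    intro p hp hp0 hd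
    have h0 : p.totalDegree = 0 := Nat.le_zero.mp hd
    have hpC : p = C (coeff 0 p) := by
      apply MvPolynomial.ext
      intro m
      by_cases hm : m = 0
      · subst hm; simp
      · rw [coeff_C, if_neg (fun h => hm h.symm)]
        by_contra hc
        obtain ⟨x, hx⟩ := Finsupp.ne_iff.mp hm
        have := ((totalDegree_eq_zero_iff ℕ p).mp h0) m (by
          rwa [MvPolynomial.mem_support_iff]) x
        simp [this] at hx
    have hc0 : coeff 0 p ≠ 0 := by
      intro h; rw [hpC, h] at hp0; simp at hp0
    have h1 : (1 : MvPolynomial ℕ ℚ) = (coeff 0 p)⁻¹ • C (coeff 0 p) := by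
      rw [smul_eq_C_mul, ← C_mul, inv_mul_cancel₀ hc0, C_1]
    rw [h1, ← hpC]
    exact S.smul_mem _ hp
  | succ N ih =>
    intro p hp hp0 hd
    by_cases h0 : p.totalDegree = 0
    · exact ih p hp hp0 (by omega)
    · obtain ⟨d, hdsup, hdeq⟩ := p.support.exists_mem_eq_sup
        (MvPolynomial.support_nonempty.mpr hp0) (fun m => m.sum fun _ e => e)
      have hdsum : (d.sum fun n e => e) ≠ 0 := by
        rw [MvPolynomial.totalDegree, hdeq] at h0
        exact h0
      obtain ⟨i, hi⟩ : ∃ i, d i ≠ 0 := by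
        by_contra hc
        push_neg at hc
        apply hdsum
        have hd0 : d = 0 := by ext j; exact hc j
        simp [hd0]
      set q := pderiv i p with hq
      have hq0 : q ≠ 0 := by
        intro h
        have hc := coeff_pderiv' i (d - Finsupp.single i 1) p
        rw [← hq, h, sub_single_add d i hi] at hc
        have hpos := Nat.cast_add_one_ne_zero (R := ℚ) (((d - Finsupp.single i 1 : ℕ →₀ ℕ)) i)
        rcases mul_eq_zero.mp hc.symm with h' | h'
        · exact hpos h'
        · exact (MvPolynomial.mem_support_iff.mp hdsup) h'
      have hqd : q.totalDegree ≤ N := by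
        rw [MvPolynomial.totalDegree]
        apply Finset.sup_le
        intro m hm
        have hc := coeff_pderiv' i m p
        have hmp : coeff (m + Finsupp.single i 1) p ≠ 0 := by
          intro h
          rw [h, mul_zero] at hc
          exact (MvPolynomial.mem_support_iff.mp hm) hc
        have hmem : (m + Finsupp.single i 1) ∈ p.support :=
          MvPolynomial.mem_support_iff.mpr hmp
        have hle : ((m + Finsupp.single i 1).sum fun _ e => e) ≤ N + 1 := by
          calc ((m + Finsupp.single i 1).sum fun _ e => e) ≤ p.totalDegree := by
                rw [MvPolynomial.totalDegree]
                exact Finset.le_sup (f := fun s => s.sum fun _ e => e) hmem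
            _ ≤ N + 1 := hd
        have hsum : ((m + Finsupp.single i 1).sum fun _ e => e)
            = (m.sum fun _ e => e) + 1 := by
          rw [Finsupp.sum_add_index (by simp) (by intros; rfl)]
          simp [Finsupp.sum_single_index]
        omega
      exact ih q (hder i p hp) hq0 hqd

/-- Irreducibility of the polynomial ring under the Heisenberg algebra: a
`ℚ`-subspace `S` of `ℚ[x₁, x₂, …]` stable under all partial derivatives and
under multiplication by each variable, and containing a nonzero polynomial,
is the whole polynomial ring. -/
theorem heisenberg_module_irreducible
    (S : Submodule ℚ (MvPolynomial ℕ ℚ))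
    (hder : ∀ (i : ℕ), ∀ p ∈ S, pderiv i p ∈ S)
    (hmul : ∀ (j : ℕ), ∀ p ∈ S, X j * p ∈ S)
    (hne : ∃ p ∈ S, p ≠ 0) :
    S = ⊤ := by
  obtain ⟨p, hp, hp0⟩ := hne
  have h1 : (1 : MvPolynomial ℕ ℚ) ∈ S :=
    one_mem_aux S hder p.totalDegree p hp hp0 le_rfl
  have hall : ∀ q : MvPolynomial ℕ ℚ, q ∈ S := by
    intro q
    induction q using MvPolynomial.induction_on with
    | C a =>
      have : (C a : MvPolynomial ℕ ℚ) = a • 1 := by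
        rw [smul_eq_C_mul, mul_one]
      rw [this]
      exact S.smul_mem _ h1
    | add f g hf hg => exact S.add_mem hf hg
    | mul_X f n hf =>
      rw [mul_comm]
      exact hmul n f hf
  rw [eq_top_iff]
  intro q _
  exact hall q
end
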